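/- arXiv:2410.21109 — 4 statements merged into one kernel-verified Lean document; each statement's English description precedes it below -/
import Mathlib

section
/- A Poisson-distributed demand with price-dependent mean cannot be written in additive-multiplicative form: there do not exist functions γ(p), δ(p) and a random variable ε independent of p such that for a non-constant function λ(p), a random variable D(p) ~ Poisson(λ(p)) is equal in distribution to γ(p)·ε + δ(p) for all p in the (non-degenerate) domain. -/
/-! If `γ p * ε + δ p` has the Poisson law of mean `λ = lam p`, then its second and third central
moments both equal `λ` (the factorial moments of a Poisson variable are `E[N(N-1)⋯(N-k+1)] = λ^k`).
Hence `γ² Var ε = λ = γ³ κ₃`, where `κ₃` is the third central moment of `ε`, and eliminating `γ`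
gives `λ κ₃² = (Var ε)³`: the mean would be the same constant at every price. -/

open MeasureTheory ProbabilityTheory Real
open scoped NNReal Nat

theorem Nat.cast_descFactorial_three {S : Type*} [CommRing S] (n : ℕ) :
    (n.descFactorial 3 : S) = n * (n - 1) * (n - 2) := by
  rw [Nat.descFactorial_succ, Nat.cast_mul, Nat.cast_descFactorial_two]
  rcases n with _ | _ | n <;> simp
  ring

theorem mul_sq_eq_pow_three_of_sq_mul_eq_of_pow_three_mul_eq {R : Type*} [CommRing R] [IsDomain R]
    {γ v t L : R} (hL : L ≠ 0)
    (h2 : γ ^ 2 * v = L) (h3 : γ ^ 3 * t = L) : L * t ^ 2 = v ^ 3 := by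
  refine mul_left_cancel₀ (pow_ne_zero 2 hL) ?_
  calc L ^ 2 * (L * t ^ 2) = (γ ^ 2 * v) ^ 3 * t ^ 2 := by rw [h2]; ring
    _ = (γ ^ 3 * t) ^ 2 * v ^ 3 := by ring
    _ = L ^ 2 * v ^ 3 := by rw [h3]

namespace ProbabilityTheory

theorem hasSum_descFactorial_poissonMeasure (r : ℝ≥0) (k : ℕ) :
    HasSum (fun n : ℕ ↦ exp (-r) * r ^ n / n ! * n.descFactorial k) (r ^ k) := by
  rw [← hasSum_nat_add_iff' k]
  have hlow : ∑ n ∈ Finset.range k, exp (-r) * r ^ n / n ! * (n.descFactorial k : ℝ) = 0 :=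
    Finset.sum_eq_zero fun n hn ↦ by
      simp [Nat.descFactorial_of_lt (Finset.mem_range.1 hn)]
  rw [hlow, sub_zero, ← mul_one ((r : ℝ) ^ k)]
  refine ((hasSum_one_poissonMeasure r).mul_left ((r : ℝ) ^ k)).congr_fun fun m ↦ ?_
  have hfac := Nat.factorial_mul_descFactorial (Nat.le_add_left k m)
  rw [Nat.add_sub_cancel] at hfac
  rw [← hfac]
  push_cast
  field_simp
  ring

theorem integral_map_cast_poissonMeasure_of_measurable {R : Type*} [NatCast R] [MeasurableSpace R]
    (r : ℝ≥0) {f : R → ℝ} (hf : Measurable f) :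
    ∫ x, f x ∂Po(R, r) = ∑' n : ℕ, exp (-r) * r ^ n / n ! * f n := by
  rw [integral_map .of_discrete hf.aestronglyMeasurable, integral_poissonMeasure]
  rfl

theorem integral_id_map_cast_poissonMeasure (r : ℝ≥0) : ∫ x, x ∂Po(ℝ, r) = r := by
  rw [integral_map_cast_poissonMeasure_of_measurable _ (by fun_prop)]
  simpa using (hasSum_descFactorial_poissonMeasure r 1).tsum_eq

theorem integral_sub_sq_map_cast_poissonMeasure (r : ℝ≥0) :
    ∫ x, (x - r) ^ 2 ∂Po(ℝ, r) = r := by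
  rw [integral_map_cast_poissonMeasure_of_measurable _ (by fun_prop)]
  have h := ((hasSum_descFactorial_poissonMeasure r 2).add
    ((hasSum_descFactorial_poissonMeasure r 1).mul_left (1 - 2 * (r : ℝ)))).add
    ((hasSum_descFactorial_poissonMeasure r 0).mul_left ((r : ℝ) ^ 2))
  convert h.tsum_eq using 1
  · congr 1
    funext n
    simp only [Nat.cast_descFactorial_two, Nat.descFactorial_one, Nat.descFactorial_zero]
    push_cast
    ring
  · ring

theorem integral_sub_pow_three_map_cast_poissonMeasure (r : ℝ≥0) :
    ∫ x, (x - r) ^ 3 ∂Po(ℝ, r) = r := by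
  rw [integral_map_cast_poissonMeasure_of_measurable _ (by fun_prop)]
  have h := (((hasSum_descFactorial_poissonMeasure r 3).add
    ((hasSum_descFactorial_poissonMeasure r 2).mul_left (3 - 3 * (r : ℝ)))).add
    ((hasSum_descFactorial_poissonMeasure r 1).mul_left (1 - 3 * (r : ℝ) + 3 * (r : ℝ) ^ 2))).add
    ((hasSum_descFactorial_poissonMeasure r 0).mul_left (-(r : ℝ) ^ 3))
  convert h.tsum_eq using 1
  · congr 1
    funext n
    simp only [Nat.cast_descFactorial_three, Nat.cast_descFactorial_two, Nat.descFactorial_one,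
      Nat.descFactorial_zero]
    push_cast
    ring
  · ring

section Affine

variable {Ω : Type*} [MeasurableSpace Ω] {μ : Measure Ω} {X : Ω → ℝ}

theorem integral_id_map_affine [IsProbabilityMeasure μ] (hX : Integrable X μ) (a b : ℝ) :
    ∫ y, y ∂(μ.map fun ω ↦ a * X ω + b) = a * μ[X] + b := by
  rw [integral_map (f := fun y ↦ y) (by fun_prop) (by fun_prop),
    integral_add (hX.const_mul a) (integrable_const b), integral_const_mul]
  simp

theorem integral_sub_pow_map_affine (hX : AEMeasurable X μ) (a b m : ℝ) (k : ℕ) :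
    ∫ y, (y - (a * m + b)) ^ k ∂(μ.map fun ω ↦ a * X ω + b) = a ^ k * ∫ ω, (X ω - m) ^ k ∂μ := by
  rw [integral_map (by fun_prop) (by fun_prop), ← integral_const_mul]
  congr 1 with ω
  rw [← mul_pow]
  ring

theorem moments_of_map_affine_eq_poissonMeasure [IsProbabilityMeasure μ] (hX : Integrable X μ)
    {a b : ℝ} {r : ℝ≥0}
    (h : μ.map (fun ω ↦ a * X ω + b) = Po(ℝ, r)) :
    a ^ 2 * variance X μ = r ∧ a ^ 3 * ∫ ω, (X ω - μ[X]) ^ 3 ∂μ = r := by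
  have hmean : a * μ[X] + b = r := by
    rw [← integral_id_map_affine hX, h, integral_id_map_cast_poissonMeasure]
  constructor
  · rw [variance_eq_integral hX.aemeasurable, ← integral_sub_pow_map_affine hX.aemeasurable,
      h, hmean, integral_sub_sq_map_cast_poissonMeasure]
  · rw [← integral_sub_pow_map_affine hX.aemeasurable, h, hmean,
      integral_sub_pow_three_map_cast_poissonMeasure]

end Affine

end ProbabilityTheory

theorem poisson_not_additive_multiplicative_general
    {Ω : Type*} [MeasurableSpace Ω] (μ : Measure Ω) [IsProbabilityMeasure μ]
    (ε : Ω → ℝ) (hmeas : Measurable ε)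
    (hmom : Integrable (fun ω => |ε ω| ^ 3) μ)
    (hthird : (∫ ω, (ε ω - ∫ ω', ε ω' ∂μ) ^ 3 ∂μ) ≠ 0)
    (lam : ℝ → ℝ) (S : Set ℝ) (hpos : ∀ p ∈ S, 0 < lam p)
    (hnonconst : ∃ p ∈ S, ∃ q ∈ S, lam p ≠ lam q) :
    ¬ ∃ γ δ : ℝ → ℝ, ∀ p ∈ S,
        Measure.map (fun ω => γ p * ε ω + δ p) μ =
          Measure.map (Nat.cast : ℕ → ℝ) (poissonMeasure (lam p).toNNReal) := by
  rintro ⟨γ, δ, hlaw⟩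
  have hint : Integrable ε μ := by
    refine (integrable_norm_iff hmeas.aestronglyMeasurable).1 ?_
    simpa using integrable_norm_rpow_of_le hmeas.aestronglyMeasurable zero_le_one
      zero_le_three (by norm_num) (by simpa [Real.rpow_natCast] using hmom)
  have hconst : ∀ p ∈ S, lam p = variance ε μ ^ 3 / (∫ ω, (ε ω - μ[ε]) ^ 3 ∂μ) ^ 2 := by
    intro p hp
    obtain ⟨h2, h3⟩ := moments_of_map_affine_eq_poissonMeasure hint (hlaw p hp)
    rw [Real.coe_toNNReal _ (hpos p hp).le] at h2 h3
    rw [eq_div_iff (pow_ne_zero 2 hthird)]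
    exact mul_sq_eq_pow_three_of_sq_mul_eq_of_pow_three_mul_eq (hpos p hp).ne' h2 h3
  obtain ⟨p, hp, q, hq, hne⟩ := hnonconst
  exact hne ((hconst p hp).trans (hconst q hq).symm)

/-- A Poisson-distributed demand with non-constant price-dependent mean cannot be
written in the additive-multiplicative form `γ(p)·ε + δ(p)` with `ε` independent
of the price: for every probability space and random variable `ε` with finite
third moment, nonzero variance and nonzero third central moment, there are no
functions `γ, δ` such that `γ(p)·ε + δ(p)` has the Poisson distribution with
mean `λ(p)` for all `p` in the domain, when `λ` is non-constant there. -/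
theorem poisson_not_additive_multiplicative
    {Ω : Type*} [MeasurableSpace Ω] (μ : Measure Ω) [IsProbabilityMeasure μ]
    (ε : Ω → ℝ) (hmeas : Measurable ε)
    (hmom : Integrable (fun ω => |ε ω| ^ 3) μ)
    (hvar : variance ε μ ≠ 0)
    (hthird : (∫ ω, (ε ω - ∫ ω', ε ω' ∂μ) ^ 3 ∂μ) ≠ 0)
    (lam : ℝ → ℝ) (S : Set ℝ) (hpos : ∀ p ∈ S, 0 < lam p)
    (hnonconst : ∃ p ∈ S, ∃ q ∈ S, lam p ≠ lam q) :
    ¬ ∃ γ δ : ℝ → ℝ, ∀ p ∈ S,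
        Measure.map (fun ω => γ p * ε ω + δ p) μ =
          Measure.map (Nat.cast : ℕ → ℝ) (poissonMeasure (lam p).toNNReal) :=
  poisson_not_additive_multiplicative_general μ ε hmeas hmom hthird lam S hpos hnonconst
end

section
/- For a Poisson random variable X with mean λ and any real x ≥ 0 with n = ⌊x⌋, the truncated sum Σ_{k=0}^{n} (λ^{k-2} e^{-λ}/k!)·(x−k)·((k−λ)² − k) is nonnegative. -/
open Finset

/-- The Poisson probability mass function with rate `l`. -/
noncomputable def pois (l : ℝ) (k : ℕ) : ℝ := l ^ k * Real.exp (-l) / (Nat.factorial k)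

/-!
The partial sums have a closed form: for `λ ≠ 0` and every `n`,
`∑_{k ≤ n} pois λ k / λ² · (x - k)((k - λ)² - k) = pois λ n / λ · (n (n + 1 - x) + λ (x - n))`,
as one checks by induction using `pois λ (n + 1) = pois λ n · λ / (n + 1)`.
The second factor is a positive combination of `n + 1 - x` and `x - n`, so it is nonnegative
whenever `n ≤ x ≤ n + 1`, in particular for `n = ⌊x⌋`.
-/

theorem pois_nonneg {l : ℝ} (hl : 0 ≤ l) (k : ℕ) : 0 ≤ pois l k := by
  unfold pois
  positivity

theorem pois_succ (l : ℝ) (k : ℕ) : pois l (k + 1) = pois l k * l / (k + 1) := by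
  simp only [pois, pow_succ, Nat.factorial_succ, Nat.cast_mul, Nat.cast_succ]
  field_simp

theorem sum_range_succ_pois_div_sq_mul_eq {l : ℝ} (hl : l ≠ 0) (x : ℝ) (n : ℕ) :
    ∑ k ∈ range (n + 1), pois l k / l ^ 2 * ((x - k) * (((k : ℝ) - l) ^ 2 - k)) =
      pois l n / l * (n * (n + 1 - x) + l * (x - n)) := by
  induction n with
  | zero =>
    simp only [zero_add, sum_range_one, pois, Nat.factorial_zero, Nat.cast_zero, Nat.cast_one,
      pow_zero]
    field_simp
    ring
  | succ n ih =>
    rw [sum_range_succ, ih, pois_succ]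
    have hn : (n : ℝ) + 1 ≠ 0 := by positivity
    push_cast
    field_simp
    ring

/-- For `X ~ Poisson(λ)` and real `x ≥ 0` with `n = ⌊x⌋`, the truncated sum
`∑_{k=0}^{n} (λ^{k-2} e^{-λ}/k!)·(x−k)·((k−λ)² − k)` is nonnegative. -/
theorem truncated_poisson_second_term_nonneg
    (lam x : ℝ) (hlam : 0 < lam) (hx : 0 ≤ x) :
    0 ≤ ∑ k ∈ Finset.range (Nat.floor x + 1),
      pois lam k / lam ^ 2 * ((x - k) * (((k : ℝ) - lam) ^ 2 - k)) := by
  rw [sum_range_succ_pois_div_sq_mul_eq hlam.ne' x]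
  have h_floor_le : (⌊x⌋₊ : ℝ) ≤ x := Nat.floor_le hx
  have h_lt_floor_succ : x < ⌊x⌋₊ + 1 := Nat.lt_floor_add_one x
  refine mul_nonneg (div_nonneg (pois_nonneg hlam.le _) hlam.le) (add_nonneg ?_ ?_)
  · exact mul_nonneg (Nat.cast_nonneg _) (by linarith)
  · exact mul_nonneg hlam.le (by linarith)
end

section
/- The expected inventory function I(p,x) = E[(x−d)⁺] with d ~ Poisson(λ(p)) has strictly positive mixed partial derivative ∂²I/(∂x∂p) at points where x is not an integer, and hence is neither jointly convex nor jointly concave in (p, x). -/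
/-!
On `0 ≤ x < 1` only the `k = 0` term survives, so `I(p, x) = e^{-λ(p)} x`, a product of a strictly
monotone function of `p` with `x`. Such a product is neither convex nor concave: averaging
`(p, 2t)` with `(q, 0)` (or `(p, 0)` with `(q, 2t)`) compares `e^{-λ}` at the midpoint of `p, q`
with its value at an endpoint. The mixed partial comes from the Poisson CDF identity
`d/dt ∑_{k ≤ n} pois t k = -pois t n` and `λ' < 0`.
-/

open Finset

open Real

lemma pois_zero (t : ℝ) : pois t 0 = exp (-t) := by
  simp [pois]

lemma pois_pos {t : ℝ} (ht : 0 < t) (k : ℕ) : 0 < pois t k := by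
  unfold pois; positivity

lemma hasDerivAt_pois_zero (t : ℝ) : HasDerivAt (fun s => pois s 0) (-pois t 0) t := by
  simp only [pois_zero]
  simpa using (hasDerivAt_neg t).exp

lemma hasDerivAt_pois_succ (k : ℕ) (t : ℝ) :
    HasDerivAt (fun s => pois s (k + 1)) (pois t k - pois t (k + 1)) t := by
  refine (((hasDerivAt_pow (k + 1) t).mul (hasDerivAt_neg t).exp).div_const
    ((k + 1).factorial : ℝ)).congr_deriv ?_
  simp only [pois, Nat.add_sub_cancel, Nat.factorial_succ, Nat.cast_mul, Nat.cast_succ]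
  field_simp
  ring

lemma hasDerivAt_sum_range_pois (n : ℕ) (t : ℝ) :
    HasDerivAt (fun s => ∑ k ∈ range (n + 1), pois s k) (-pois t n) t := by
  induction n with
  | zero => simpa using hasDerivAt_pois_zero t
  | succ n ih =>
    simp only [sum_range_succ _ (n + 1)]
    exact (ih.fun_add (hasDerivAt_pois_succ n t)).congr_deriv (by ring)

lemma sum_floor_mul_sub_of_lt_one (c : ℕ → ℝ) {y : ℝ} (hy : y < 1) :
    ∑ k ∈ range (⌊y⌋₊ + 1), c k * (y - k) = c 0 * y := by
  simp [Nat.floor_eq_zero.2 hy]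

lemma hasDerivAt_sum_floor_mul_sub (c : ℕ → ℝ) {n : ℕ} {x : ℝ}
    (hx : x ∈ Set.Ioo (n : ℝ) (n + 1)) :
    HasDerivAt (fun y => ∑ k ∈ range (⌊y⌋₊ + 1), c k * (y - k)) (∑ k ∈ range (n + 1), c k) x := by
  have hfloor : ∀ᶠ y in nhds x, ⌊y⌋₊ = n := by
    filter_upwards [Ioo_mem_nhds hx.1 hx.2] with y hy
    exact (Nat.floor_eq_iff ((Nat.cast_nonneg n).trans hy.1.le)).2 ⟨hy.1.le, hy.2⟩
  have hsum : HasDerivAt (fun y => ∑ k ∈ range (n + 1), c k * (y - k))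
      (∑ k ∈ range (n + 1), c k) x :=
    HasDerivAt.fun_sum fun k _ => by
      simpa using ((hasDerivAt_id x).sub_const (k : ℝ)).const_mul (c k)
  exact hsum.congr_of_eventuallyEq (hfloor.mono fun y hy => by simp only [hy])

lemma exp_div_one_add_exp (t : ℝ) : exp t / (1 + exp t) = sigmoid t := by
  rw [sigmoid_def, exp_neg]
  field_simp
  ring

lemma sigmoid_mul_one_sub_pos (t : ℝ) : 0 < sigmoid t * (1 - sigmoid t) :=
  mul_pos (sigmoid_pos t) (sub_pos.2 (sigmoid_lt_one t))

lemma hasDerivAt_const_mul_sigmoid_affine (c l a p : ℝ) :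
    HasDerivAt (fun q => c * sigmoid (l * q + a))
      (c * (sigmoid (l * p + a) * (1 - sigmoid (l * p + a)) * l)) p := by
  have haffine : HasDerivAt (fun q => l * q + a) l p := by
    simpa using ((hasDerivAt_id p).const_mul l).add_const a
  exact ((hasDerivAt_sigmoid _).comp p haffine).const_mul c

section ProductWithLinear

variable {S : Set ℝ} {f : ℝ × ℝ → ℝ} {φ : ℝ → ℝ} {ε : ℝ}

lemma ConvexOn.apply_midpoint_le_of_eq_mul (hf : ConvexOn ℝ (S ×ˢ Set.Ici 0) f) (hε : 0 < ε)
    (hφ : ∀ p ∈ S, ∀ y ∈ Set.Icc 0 ε, f (p, y) = φ p * y) {p q : ℝ} (hp : p ∈ S)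
    (hq : q ∈ S) : (p + q) / 2 ∈ S ∧ φ ((p + q) / 2) ≤ φ p := by
  have hpε : ((p, ε) : ℝ × ℝ) ∈ S ×ˢ Set.Ici 0 := ⟨hp, hε.le⟩
  have hq0 : ((q, 0) : ℝ × ℝ) ∈ S ×ˢ Set.Ici 0 := ⟨hq, Set.mem_Ici.2 le_rfl⟩
  have hcomb : (1 / 2 : ℝ) • ((p, ε) : ℝ × ℝ) + (1 / 2 : ℝ) • (q, 0) = ((p + q) / 2, ε / 2) := by
    simp only [Prod.smul_mk, Prod.mk_add_mk, smul_eq_mul, mul_zero, add_zero, Prod.mk.injEq]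
    constructor <;> ring
  have hmid : (p + q) / 2 ∈ S := by
    have := hf.1 hpε hq0 one_half_pos.le one_half_pos.le (add_halves 1)
    rw [hcomb] at this
    exact this.1
  have key := hf.2 hpε hq0 one_half_pos.le one_half_pos.le (add_halves 1)
  rw [hcomb, smul_eq_mul, smul_eq_mul, hφ _ hmid _ ⟨by positivity, by linarith⟩,
    hφ _ hp _ ⟨hε.le, le_rfl⟩, hφ _ hq _ ⟨le_rfl, hε.le⟩] at key
  exact ⟨hmid, le_of_mul_le_mul_right (by linarith) (half_pos hε)⟩

lemma not_convexOn_of_eq_mul (hε : 0 < ε) (hφ : ∀ p ∈ S, ∀ y ∈ Set.Icc 0 ε, f (p, y) = φ p * y)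
    (hmono : StrictMonoOn φ S ∨ StrictAntiOn φ S) (hS : S.Nontrivial) :
    ¬ ConvexOn ℝ (S ×ˢ Set.Ici 0) f := by
  intro hf
  obtain ⟨p, hp, q, hq, hpq⟩ := hS.exists_lt
  obtain ⟨hmid, hle_p⟩ := hf.apply_midpoint_le_of_eq_mul hε hφ hp hq
  have hle_q := (hf.apply_midpoint_le_of_eq_mul hε hφ hq hp).2
  rw [add_comm q p] at hle_q
  rcases hmono with hmono | hmono
  · exact (hmono hp hmid (by linarith)).not_ge hle_p
  · exact (hmono hmid hq (by linarith)).not_ge hle_q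

lemma not_concaveOn_of_eq_mul (hε : 0 < ε) (hφ : ∀ p ∈ S, ∀ y ∈ Set.Icc 0 ε, f (p, y) = φ p * y)
    (hmono : StrictMonoOn φ S ∨ StrictAntiOn φ S) (hS : S.Nontrivial) :
    ¬ ConcaveOn ℝ (S ×ˢ Set.Ici 0) f := fun hf =>
  not_convexOn_of_eq_mul (φ := -φ) hε
    (fun p hp y hy => by simp [hφ p hp y hy, neg_mul])
    (hmono.symm.imp (fun h => h.neg) fun h => h.neg) hS hf.neg

end ProductWithLinear

theorem inventory_mixed_partial_pos_not_jointly_convex_concave_general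
    (eta Delta l a : ℝ) (heta : 0 < eta) (hDelta : Delta ∈ Set.Ioc (0:ℝ) 1)
    (hl : l < 0)
    (S : Set ℝ)
    (hSint : (interior S).Nonempty)
    (lam : ℝ → ℝ)
    (hlam : ∀ p, lam p = eta * Delta * Real.exp (l * p + a) / (1 + Real.exp (l * p + a)))
    (I : ℝ → ℝ → ℝ)
    (hI : ∀ p y, I p y = ∑ k ∈ Finset.range (Nat.floor y + 1), pois (lam p) k * (y - k)) :
    (∀ p ∈ S, ∀ x : ℝ, 0 < x → (∀ n : ℕ, x ≠ n) →
      0 < deriv (fun q => deriv (fun y => I q y) x) p) ∧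
    ¬ ConvexOn ℝ (S ×ˢ Set.Ici (0:ℝ)) (fun q : ℝ × ℝ => I q.1 q.2) ∧
    ¬ ConcaveOn ℝ (S ×ˢ Set.Ici (0:ℝ)) (fun q : ℝ × ℝ => I q.1 q.2) := by
  have hc : 0 < eta * Delta := mul_pos heta hDelta.1
  have hlam_eq : lam = fun p => eta * Delta * sigmoid (l * p + a) :=
    funext fun p => by rw [hlam, mul_div_assoc, exp_div_one_add_exp]
  set lam' := fun p => eta * Delta * (sigmoid (l * p + a) * (1 - sigmoid (l * p + a)) * l)
  have hlam_deriv : ∀ p, HasDerivAt lam (lam' p) p :=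
    hlam_eq ▸ hasDerivAt_const_mul_sigmoid_affine (eta * Delta) l a
  have hlam'_neg : ∀ p, lam' p < 0 := fun p =>
    mul_neg_of_pos_of_neg hc (mul_neg_of_pos_of_neg (sigmoid_mul_one_sub_pos _) hl)
  have hlam_pos : ∀ p, 0 < lam p := fun p => hlam_eq ▸ mul_pos hc (sigmoid_pos _)
  have hφ : StrictMono fun p => exp (-lam p) :=
    exp_strictMono.comp (strictAnti_of_hasDerivAt_neg hlam_deriv hlam'_neg).neg
  have hI_small : ∀ p ∈ S, ∀ y ∈ Set.Icc (0 : ℝ) (1 / 2), I p y = exp (-lam p) * y :=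
    fun p _ y hy => by rw [hI, sum_floor_mul_sub_of_lt_one _ (by linarith [hy.2]), pois_zero]
  obtain ⟨p₀, hp₀⟩ := hSint
  have hS : S.Nontrivial := (infinite_of_mem_nhds p₀ (mem_interior_iff_mem_nhds.1 hp₀)).nontrivial
  refine ⟨fun p _ x hx hx_nat => ?_, not_convexOn_of_eq_mul one_half_pos hI_small
    (Or.inl (hφ.strictMonoOn S)) hS, not_concaveOn_of_eq_mul one_half_pos hI_small
    (Or.inl (hφ.strictMonoOn S)) hS⟩
  have hx_mem : x ∈ Set.Ioo (⌊x⌋₊ : ℝ) (⌊x⌋₊ + 1) :=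
    ⟨(Nat.floor_le hx.le).lt_of_ne (hx_nat _).symm, Nat.lt_floor_add_one x⟩
  have hpartial_x : (fun q => deriv (fun y => I q y) x) =
      fun q => ∑ k ∈ range (⌊x⌋₊ + 1), pois (lam q) k := funext fun q => by
    simp only [hI]
    exact (hasDerivAt_sum_floor_mul_sub _ hx_mem).deriv
  have hpartial_xp : HasDerivAt (fun q => ∑ k ∈ range (⌊x⌋₊ + 1), pois (lam q) k)
      (-pois (lam p) ⌊x⌋₊ * lam' p) p :=
    (hasDerivAt_sum_range_pois _ (lam p)).comp p (hlam_deriv p)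
  rw [hpartial_x, hpartial_xp.deriv]
  exact mul_pos_of_neg_of_neg (neg_neg_of_pos (pois_pos (hlam_pos p) _)) (hlam'_neg p)

/-- The expected inventory `I(p,x) = E[(x−d)⁺]` with `d ~ Poisson(λ(p))`, where
`λ(p) = ηΔ·e^{lp+a}/(1+e^{lp+a})`, `l < 0`, `lp+a > 0` on a bounded price
domain, has strictly positive mixed partial `∂²I/(∂x∂p)` at points where `x`
is not an integer, and the function is neither jointly convex nor jointly
concave on the domain. -/
theorem inventory_mixed_partial_pos_not_jointly_convex_concave
    (eta Delta l a : ℝ) (heta : 0 < eta) (hDelta : Delta ∈ Set.Ioc (0:ℝ) 1)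
    (hl : l < 0)
    (S : Set ℝ) (hbdd : Bornology.IsBounded S) (hdom : ∀ p ∈ S, 0 < l * p + a)
    (hSconv : Convex ℝ S) (hSint : (interior S).Nonempty)
    (lam : ℝ → ℝ)
    (hlam : ∀ p, lam p = eta * Delta * Real.exp (l * p + a) / (1 + Real.exp (l * p + a)))
    (I : ℝ → ℝ → ℝ)
    (hI : ∀ p y, I p y = ∑ k ∈ Finset.range (Nat.floor y + 1), pois (lam p) k * (y - k)) :
    (∀ p ∈ S, ∀ x : ℝ, 0 < x → (∀ n : ℕ, x ≠ n) →
      0 < deriv (fun q => deriv (fun y => I q y) x) p) ∧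
    ¬ ConvexOn ℝ (S ×ˢ Set.Ici (0:ℝ)) (fun q : ℝ × ℝ => I q.1 q.2) ∧
    ¬ ConcaveOn ℝ (S ×ˢ Set.Ici (0:ℝ)) (fun q : ℝ × ℝ => I q.1 q.2) :=
  inventory_mixed_partial_pos_not_jointly_convex_concave_general eta Delta l a heta hDelta hl S
    hSint lam hlam I hI
end

section
/- The likelihood-ratio gradient estimator for price is unbiased: ∂F/∂p = E[min(d,x)] + p·E[(∂ log P(d)/∂p)·min(d,x)] − (h+b)·E[(∂ log P(d)/∂p)·(x−d)⁺] − b·∂λ/∂p, where ∂ log P(d)/∂p = (d/λ − 1)·∂λ/∂p for d ~ Poisson(λ(p)). -/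
/-!
In the rate `t`, each term `pois t k * g k` has derivative `pois t k * (k / t - 1) * g k`, the
score `k / t - 1` of the Poisson law being `∂ log P(k) / ∂t`. For bounded `g` these derivatives
are dominated on `(0, λ + 1)` by `C (2 (λ + 1))^k / k!`, a summable sequence, so the series may be
differentiated termwise; the chain rule through `λ(p)` then gives the estimator.
-/

open Real

noncomputable def poisDeriv (t : ℝ) (k : ℕ) : ℝ :=
  ((k : ℝ) * t ^ (k - 1) - t ^ k) * exp (-t) / k.factorial

lemma hasDerivAt_pois (k : ℕ) (t : ℝ) : HasDerivAt (pois · k) (poisDeriv t k) t := by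
  have hexp : HasDerivAt (fun s => exp (-s)) (-exp (-t)) t := by
    simpa using (hasDerivAt_neg t).exp
  refine (((hasDerivAt_pow k t).mul hexp).div_const (k.factorial : ℝ)).congr_deriv ?_
  unfold poisDeriv
  ring

lemma poisDeriv_eq_pois_mul {t : ℝ} (ht : t ≠ 0) (k : ℕ) :
    poisDeriv t k = pois t k * ((k : ℝ) / t - 1) := by
  unfold poisDeriv pois
  rcases k with _ | k
  · simp
  · rw [Nat.add_sub_cancel, pow_succ]
    field_simp

lemma pois_nonneg_s16 {t : ℝ} (ht : 0 ≤ t) (k : ℕ) : 0 ≤ pois t k := by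
  unfold pois; positivity

lemma pois_le_pow_div_factorial {t : ℝ} (ht : 0 ≤ t) (k : ℕ) :
    pois t k ≤ t ^ k / k.factorial := by
  unfold pois
  gcongr
  exact mul_le_of_le_one_right (by positivity) (exp_le_one_iff.mpr (by linarith))

lemma abs_poisDeriv_le {y R : ℝ} (hy : 0 ≤ y) (hyR : y ≤ R) (hR : 1 ≤ R) (k : ℕ) :
    |poisDeriv y k| ≤ (2 * R) ^ k / k.factorial := by
  have hpow : |(k : ℝ) * y ^ (k - 1) - y ^ k| ≤ 2 ^ k * R ^ k :=
    calc |(k : ℝ) * y ^ (k - 1) - y ^ k| ≤ (k : ℝ) * y ^ (k - 1) + y ^ k := by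
          rw [abs_le]; constructor <;> nlinarith [pow_nonneg hy k, pow_nonneg hy (k - 1)]
      _ ≤ (k : ℝ) * R ^ k + R ^ k := by
          gcongr
          exact (pow_le_pow_left₀ hy hyR _).trans (pow_le_pow_right₀ hR (Nat.sub_le k 1))
      _ = ((k : ℝ) + 1) * R ^ k := by ring
      _ ≤ 2 ^ k * R ^ k := by
          gcongr
          exact_mod_cast Nat.lt_two_pow_self
  unfold poisDeriv
  rw [abs_div, abs_mul, abs_of_pos (exp_pos _), Nat.abs_cast, mul_pow]
  gcongr ?_ / _
  calc |(k : ℝ) * y ^ (k - 1) - y ^ k| * exp (-y) ≤ |(k : ℝ) * y ^ (k - 1) - y ^ k| :=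
        mul_le_of_le_one_right (abs_nonneg _) (exp_le_one_iff.mpr (by linarith))
    _ ≤ 2 ^ k * R ^ k := hpow

lemma hasDerivAt_tsum_pois_mul {g : ℕ → ℝ} {C : ℝ} (hg : ∀ k, |g k| ≤ C) {l : ℝ} (hl : 0 < l) :
    HasDerivAt (fun t => ∑' k, pois t k * g k) (∑' k, pois l k * ((k : ℝ) / l - 1) * g k) l := by
  have hC : 0 ≤ C := (abs_nonneg _).trans (hg 0)
  have hmem : l ∈ Set.Ioo 0 (l + 1) := ⟨hl, by linarith⟩
  have hbound : ∀ k, ∀ y ∈ Set.Ioo 0 (l + 1),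
      ‖poisDeriv y k * g k‖ ≤ C * ((2 * (l + 1)) ^ k / k.factorial) := by
    rintro k y ⟨hy0, hy1⟩
    rw [norm_mul, mul_comm]
    exact mul_le_mul (hg k) (abs_poisDeriv_le hy0.le hy1.le (by linarith) k) (abs_nonneg _) hC
  have hsummable : Summable fun k => pois l k * g k := by
    refine .of_norm_bounded ((summable_pow_div_factorial l).mul_left C) fun k => ?_
    rw [norm_mul, mul_comm, Real.norm_of_nonneg (pois_nonneg_s16 hl.le k)]
    exact mul_le_mul (hg k) (pois_le_pow_div_factorial hl.le k) (pois_nonneg_s16 hl.le k) hC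
  refine (hasDerivAt_tsum_of_isPreconnected ((summable_pow_div_factorial _).mul_left C)
    isOpen_Ioo isPreconnected_Ioo (fun k y _ => (hasDerivAt_pois k y).mul_const (g k))
    hbound hmem hsummable hmem).congr_deriv ?_
  simp only [poisDeriv_eq_pois_mul hl.ne']

lemma hasDerivAt_tsum_pois_comp_mul {g : ℕ → ℝ} {C : ℝ} (hg : ∀ k, |g k| ≤ C)
    {lam : ℝ → ℝ} {lam' p : ℝ} (hlam : HasDerivAt lam lam' p) (hl : 0 < lam p) :
    HasDerivAt (fun q => ∑' k, pois (lam q) k * g k)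
      (∑' k, pois (lam p) k * (((k : ℝ) / lam p - 1) * lam') * g k) p := by
  refine ((hasDerivAt_tsum_pois_mul hg hl).comp p hlam).congr_deriv ?_
  rw [← tsum_mul_right]
  congr 1 with k
  ring

lemma abs_min_natCast_le (x : ℝ) (k : ℕ) : |min (k : ℝ) x| ≤ |x| := by
  rcases le_total (k : ℝ) x with hk | hk
  · rw [min_eq_left hk, abs_of_nonneg k.cast_nonneg]
    exact hk.trans (le_abs_self x)
  · rw [min_eq_right hk]

lemma abs_max_sub_natCast_le (x : ℝ) (k : ℕ) : |max (x - k) 0| ≤ |x| := by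
  have := k.cast_nonneg (α := ℝ)
  rw [abs_of_nonneg (le_max_right _ _)]
  exact max_le (by linarith [le_abs_self x]) (abs_nonneg x)

theorem likelihood_ratio_gradient_unbiased_general
    (h b c x x0 : ℝ) (lam : ℝ → ℝ)
    (S : Set ℝ)
    (hpos : ∀ p ∈ S, 0 < lam p) (hdiff : ∀ p ∈ S, DifferentiableAt ℝ lam p)
    (F : ℝ → ℝ)
    (hF : ∀ p, F p =
      p * ∑' k : ℕ, pois (lam p) k * min (k : ℝ) x
      - (h + b) * ∑' k : ℕ, pois (lam p) k * max (x - k) 0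
      - b * lam p + b * x - c * (x - x0)) :
    ∀ p ∈ S, deriv F p =
      (∑' k : ℕ, pois (lam p) k * min (k : ℝ) x)
      + p * ∑' k : ℕ, pois (lam p) k * (((k : ℝ) / lam p - 1) * deriv lam p) * min (k : ℝ) x
      - (h + b) * ∑' k : ℕ, pois (lam p) k * (((k : ℝ) / lam p - 1) * deriv lam p) * max (x - k) 0
      - b * deriv lam p := by
  intro p hp
  have hlam := (hdiff p hp).hasDerivAt
  have hsales := hasDerivAt_tsum_pois_comp_mul (abs_min_natCast_le x) hlam (hpos p hp)
  have hleftover := hasDerivAt_tsum_pois_comp_mul (abs_max_sub_natCast_le x) hlam (hpos p hp)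
  rw [funext hF]
  refine ((((((hasDerivAt_id' p).mul hsales).sub (hleftover.const_mul (h + b))).sub
    (hlam.const_mul b)).add_const (b * x)).sub_const (c * (x - x0))).deriv.trans ?_
  ring

/-- The likelihood-ratio gradient estimator for price is unbiased: with
`d ~ Poisson(λ(p))` and `F(p) = p·E[min(d,x)] − (h+b)·E[(x−d)⁺] − b·λ(p) + b·x − c(x−x₀)`,
`∂F/∂p = E[min(d,x)] + p·E[(∂ log P(d)/∂p)·min(d,x)]
  − (h+b)·E[(∂ log P(d)/∂p)·(x−d)⁺] − b·λ'(p)`,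
where `∂ log P(d)/∂p = (d/λ − 1)·λ'(p)`. -/
theorem likelihood_ratio_gradient_unbiased
    (h b c x x0 : ℝ) (lam : ℝ → ℝ)
    (S : Set ℝ) (hbdd : Bornology.IsBounded S)
    (hpos : ∀ p ∈ S, 0 < lam p) (hdiff : ∀ p ∈ S, DifferentiableAt ℝ lam p)
    (F : ℝ → ℝ)
    (hF : ∀ p, F p =
      p * ∑' k : ℕ, pois (lam p) k * min (k : ℝ) x
      - (h + b) * ∑' k : ℕ, pois (lam p) k * max (x - k) 0
      - b * lam p + b * x - c * (x - x0)) :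
    ∀ p ∈ S, deriv F p =
      (∑' k : ℕ, pois (lam p) k * min (k : ℝ) x)
      + p * ∑' k : ℕ, pois (lam p) k * (((k : ℝ) / lam p - 1) * deriv lam p) * min (k : ℝ) x
      - (h + b) * ∑' k : ℕ, pois (lam p) k * (((k : ℝ) / lam p - 1) * deriv lam p) * max (x - k) 0
      - b * deriv lam p :=
  likelihood_ratio_gradient_unbiased_general h b c x x0 lam S hpos hdiff F hF
end
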